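/- For every 0 < α ≤ 1, the Fermi relative speed v_F(σ₀) converges as σ₀ → ∞ to √π·Γ(1/(2α)+1/2)/(2α·Γ(1/(2α)+1)), and v_F(σ₀) is strictly less than this limit for every σ₀ ∈ (1,∞); hence this value is the least upper bound of the Fermi relative speeds of comoving test particles in the Robertson–Walker spacetime with scale factor a(t) = t^α. -/

import Mathlib

/-!
Substituting `σ = 1/t` turns `∫₁^∞ σ^(-q) (σ - 1)^(-1/2) dσ` into the Beta integral
`B(q - 1/2, 1/2) = √π Γ(q - 1/2) / Γ(q)`; with `q = 1/(2α) + 1` this is the limit of the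
first term of `v_F`.
The second term is `(α - 1)/σ₀` times an integral of size `O(√σ₀)`, so it tends to `0`;
for `α ≤ 1` it is nonpositive, and the first integral stays strictly below its limit since
the integrand is positive, so `v_F` never reaches the limit.
-/

open Real MeasureTheory Filter Set intervalIntegral

noncomputable section

/-- The Fermi relative speed of a comoving test particle at parameter σ₀ in the
Robertson–Walker spacetime with scale factor a(t) = t^α. -/
def vFpow (α σ₀ : ℝ) : ℝ :=
  (1 / (2 * α)) *
    ((∫ σ in (1:ℝ)..σ₀, σ ^ (-(1 / (2 * α) + 1)) / Real.sqrt (σ - 1)) +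
      ((α - 1) / σ₀) * ∫ σ in (1:ℝ)..σ₀, σ ^ (-(1 / (2 * α))) / Real.sqrt (σ - 1))

lemma ofReal_rpow_mul_one_sub_rpow {a b t : ℝ} (ht : t ∈ Icc (0:ℝ) 1) :
    ((t ^ (a - 1) * (1 - t) ^ (b - 1) : ℝ) : ℂ) =
      (t : ℂ) ^ ((a : ℂ) - 1) * (1 - (t : ℂ)) ^ ((b : ℂ) - 1) := by
  rw [Complex.ofReal_mul, Complex.ofReal_cpow ht.1, Complex.ofReal_cpow (sub_nonneg.2 ht.2)]
  push_cast
  rfl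

lemma intervalIntegrable_rpow_mul_one_sub_rpow {a b : ℝ} (ha : 0 < a) (hb : 0 < b) :
    IntervalIntegrable (fun t : ℝ => t ^ (a - 1) * (1 - t) ^ (b - 1)) volume 0 1 := by
  have hC := (Complex.betaIntegral_convergent (u := a) (v := b) (by simpa) (by simpa)).congr
    fun t ht => (ofReal_rpow_mul_one_sub_rpow (a := a) (b := b)
      (uIcc_of_le (zero_le_one' ℝ) ▸ uIoc_subset_uIcc ht)).symm
  simpa using intervalIntegrable_iff.2 (intervalIntegrable_iff.1 hC).re

lemma integral_rpow_mul_one_sub_rpow {a b : ℝ} (ha : 0 < a) (hb : 0 < b) :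
    ∫ t in (0:ℝ)..1, t ^ (a - 1) * (1 - t) ^ (b - 1) = Gamma a * Gamma b / Gamma (a + b) := by
  have h := Complex.Gamma_mul_Gamma_eq_betaIntegral (s := a) (t := b) (by simpa) (by simpa)
  rw [Complex.betaIntegral, ← integral_congr fun t ht => ofReal_rpow_mul_one_sub_rpow
    (uIcc_of_le (zero_le_one' ℝ) ▸ ht), intervalIntegral.integral_ofReal, ← Complex.ofReal_add,
    Complex.Gamma_ofReal, Complex.Gamma_ofReal, Complex.Gamma_ofReal] at h
  rw [eq_div_iff (Gamma_pos_of_pos (add_pos ha hb)).ne', mul_comm]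
  exact_mod_cast h.symm

lemma inv_image_Ioo_zero_one : (fun t : ℝ => t⁻¹) '' Ioo 0 1 = Ioi 1 := by
  ext x
  constructor
  · rintro ⟨t, ⟨ht0, ht1⟩, rfl⟩
    exact (one_lt_inv₀ ht0).2 ht1
  · intro hx
    exact ⟨x⁻¹, ⟨inv_pos.2 (zero_lt_one.trans hx), inv_lt_one_of_one_lt₀ hx⟩, inv_inv x⟩

lemma hasDerivWithinAt_inv_Ioo_zero_one :
    ∀ t ∈ Ioo (0:ℝ) 1, HasDerivWithinAt (fun t : ℝ => t⁻¹) (-(t ^ 2)⁻¹) (Ioo 0 1) t :=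
  fun _ ht => (hasDerivAt_inv ht.1.ne').hasDerivWithinAt

section InvSubstitution

variable {E : Type*} [NormedAddCommGroup E] [NormedSpace ℝ E]

lemma abs_neg_inv_sq_smul_eq {t : ℝ} (x : E) : |(-(t ^ 2)⁻¹)| • x = (t ^ 2)⁻¹ • x := by
  rw [abs_neg, abs_of_nonneg (inv_nonneg.2 (sq_nonneg t))]

theorem integrableOn_Ioi_one_iff_comp_inv {f : ℝ → E} :
    IntegrableOn f (Ioi 1) ↔ IntegrableOn (fun t => (t ^ 2)⁻¹ • f t⁻¹) (Ioo 0 1) := by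
  simp_rw [← inv_image_Ioo_zero_one, integrableOn_image_iff_integrableOn_abs_deriv_smul
    measurableSet_Ioo hasDerivWithinAt_inv_Ioo_zero_one inv_injective.injOn,
    abs_neg_inv_sq_smul_eq]

theorem integral_Ioi_one_eq_integral_comp_inv (f : ℝ → E) :
    ∫ σ in Ioi 1, f σ = ∫ t in Ioo 0 1, (t ^ 2)⁻¹ • f t⁻¹ := by
  simp_rw [← inv_image_Ioo_zero_one, integral_image_eq_integral_abs_deriv_smul
    measurableSet_Ioo hasDerivWithinAt_inv_Ioo_zero_one inv_injective.injOn,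
    abs_neg_inv_sq_smul_eq]

end InvSubstitution

lemma intervalIntegral_lt_integral_Ioi {f : ℝ → ℝ} {a b : ℝ} (hab : a ≤ b)
    (hf : IntegrableOn f (Ioi a)) (hpos : ∀ x ∈ Ioi b, 0 < f x) :
    ∫ x in a..b, f x < ∫ x in Ioi a, f x := by
  have hfb : IntegrableOn f (Ioi b) := hf.mono_set (Ioi_subset_Ioi hab)
  have htail : 0 < ∫ x in Ioi b, f x := by
    rw [setIntegral_pos_iff_support_of_nonneg_ae
      (ae_restrict_of_forall_mem measurableSet_Ioi fun x hx => (hpos x hx).le) hfb,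
      show Function.support f ∩ Ioi b = Ioi b from inter_eq_right.2 fun x hx => (hpos x hx).ne',
      volume_Ioi]
    exact ENNReal.zero_lt_top
  rw [← integral_interval_add_Ioi hf hfb]
  exact lt_add_of_pos_right _ htail

lemma isLUB_image_of_tendsto_atTop {β γ : Type*} [SemilatticeSup β] [Nonempty β] [NoMaxOrder β]
    [LinearOrder γ] [TopologicalSpace γ] [OrderClosedTopology γ] {f : β → γ} {a : β} {L : γ}
    (hle : ∀ x ∈ Ioi a, f x ≤ L) (hf : Tendsto f atTop (nhds L)) :
    IsLUB (f '' Ioi a) L := by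
  refine ⟨forall_mem_image.2 hle, fun b hb => le_of_tendsto hf ?_⟩
  filter_upwards [eventually_gt_atTop a] with x hx using hb (mem_image_of_mem f hx)

def fermiKernel (q σ : ℝ) : ℝ := σ ^ (-q) / √(σ - 1)

lemma vFpow_eq (α σ₀ : ℝ) :
    vFpow α σ₀ = (1 / (2 * α)) * ((∫ σ in (1:ℝ)..σ₀, fermiKernel (1 / (2 * α) + 1) σ) +
      ((α - 1) / σ₀) * ∫ σ in (1:ℝ)..σ₀, fermiKernel (1 / (2 * α)) σ) := rfl

lemma fermiKernel_pos (q : ℝ) {σ : ℝ} (hσ : 1 < σ) : 0 < fermiKernel q σ :=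
  div_pos (rpow_pos_of_pos (zero_lt_one.trans hσ) _) (sqrt_pos.2 (sub_pos.2 hσ))

lemma fermiKernel_nonneg (q : ℝ) {σ : ℝ} (hσ : 1 ≤ σ) : 0 ≤ fermiKernel q σ :=
  div_nonneg (rpow_nonneg (zero_le_one.trans hσ) _) (sqrt_nonneg _)

lemma fermiKernel_eq_mul (q : ℝ) {σ : ℝ} (hσ : 1 ≤ σ) :
    fermiKernel q σ = σ ^ (-q) * (σ - 1) ^ (-(1 / 2) : ℝ) := by
  rw [fermiKernel, div_eq_mul_inv, sqrt_eq_rpow, ← rpow_neg (sub_nonneg.2 hσ)]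

lemma inv_sq_smul_fermiKernel_inv {q t : ℝ} (ht : t ∈ Ioo (0:ℝ) 1) :
    (t ^ 2)⁻¹ • fermiKernel q t⁻¹ = t ^ (q - 1 / 2 - 1) * (1 - t) ^ ((1:ℝ) / 2 - 1) := by
  obtain ⟨ht0, ht1⟩ := ht
  have h1t : 0 < 1 - t := sub_pos.2 ht1
  rw [fermiKernel_eq_mul q (one_le_inv₀ ht0 |>.2 ht1.le), show t⁻¹ - 1 = (1 - t) * t⁻¹ by
    field_simp, mul_rpow h1t.le (inv_nonneg.2 ht0.le), inv_rpow ht0.le, inv_rpow ht0.le,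
    rpow_neg ht0.le, inv_inv, ← rpow_neg ht0.le, smul_eq_mul, ← rpow_natCast, ← rpow_neg ht0.le]
  have hpow : t ^ (-((2:ℕ):ℝ)) * t ^ q * t ^ (-(-(1 / 2)):ℝ) = t ^ (q - 1 / 2 - 1) := by
    rw [← rpow_add ht0, ← rpow_add ht0]
    ring_nf
  rw [← hpow, show (1:ℝ) / 2 - 1 = -(1 / 2) by norm_num]
  ring

lemma integrableOn_fermiKernel {q : ℝ} (hq : 1 / 2 < q) :
    IntegrableOn (fermiKernel q) (Ioi 1) := by
  rw [integrableOn_Ioi_one_iff_comp_inv]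
  refine IntegrableOn.congr_fun ?_ (fun t ht => (inv_sq_smul_fermiKernel_inv ht).symm)
    measurableSet_Ioo
  exact (intervalIntegrable_iff_integrableOn_Ioo_of_le zero_le_one).1
    (intervalIntegrable_rpow_mul_one_sub_rpow (sub_pos.2 hq) one_half_pos)

lemma integral_fermiKernel {q : ℝ} (hq : 1 / 2 < q) :
    ∫ σ in Ioi 1, fermiKernel q σ = √π * Gamma (q - 1 / 2) / Gamma q := by
  rw [integral_Ioi_one_eq_integral_comp_inv, setIntegral_congr_fun measurableSet_Ioo
    fun t ht => inv_sq_smul_fermiKernel_inv ht, ← integral_Ioc_eq_integral_Ioo,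
    ← intervalIntegral.integral_of_le zero_le_one,
    integral_rpow_mul_one_sub_rpow (sub_pos.2 hq) one_half_pos, Gamma_one_half_eq,
    sub_add_cancel, mul_comm]

lemma intervalIntegrable_sub_one_rpow_neg_half (σ₀ : ℝ) :
    IntervalIntegrable (fun σ : ℝ => (σ - 1) ^ (-(1 / 2) : ℝ)) volume 1 σ₀ := by
  simpa using (intervalIntegrable_rpow' (a := 0) (b := σ₀ - 1) (r := -(1 / 2))
    (by norm_num)).comp_sub_right 1

lemma intervalIntegrable_fermiKernel (q : ℝ) {σ₀ : ℝ} (hσ₀ : 1 ≤ σ₀) :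
    IntervalIntegrable (fermiKernel q) volume 1 σ₀ := by
  refine ((intervalIntegrable_sub_one_rpow_neg_half σ₀).continuousOn_mul
    (g := fun σ => σ ^ (-q)) ?_).congr fun σ hσ => ?_
  · exact continuousOn_id.rpow_const fun σ hσ =>
      Or.inl (zero_lt_one.trans_le (uIcc_of_le hσ₀ ▸ hσ).1).ne'
  · rw [uIoc_of_le hσ₀] at hσ
    exact (fermiKernel_eq_mul q hσ.1.le).symm

lemma intervalIntegral_fermiKernel_le {q : ℝ} (hq : 0 ≤ q) {σ₀ : ℝ} (hσ₀ : 1 ≤ σ₀) :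
    ∫ σ in (1:ℝ)..σ₀, fermiKernel q σ ≤ 2 * √σ₀ := by
  calc ∫ σ in (1:ℝ)..σ₀, fermiKernel q σ ≤ ∫ σ in (1:ℝ)..σ₀, (σ - 1) ^ (-(1 / 2) : ℝ) := by
        refine integral_mono_on hσ₀ (intervalIntegrable_fermiKernel q hσ₀)
          (intervalIntegrable_sub_one_rpow_neg_half σ₀) fun σ hσ => ?_
        rw [fermiKernel_eq_mul q hσ.1]
        exact mul_le_of_le_one_left (rpow_nonneg (sub_nonneg.2 hσ.1) _)
          (rpow_le_one_of_one_le_of_nonpos hσ.1 (neg_nonpos.2 hq))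
    _ = 2 * √(σ₀ - 1) := by
        rw [integral_comp_sub_right (fun x => x ^ (-(1 / 2) : ℝ)), sub_self,
          integral_rpow (Or.inl (by norm_num)), zero_rpow (by norm_num), sqrt_eq_rpow]
        norm_num
        ring
    _ ≤ 2 * √σ₀ := by gcongr; linarith

lemma tendsto_intervalIntegral_fermiKernel_div_atTop {q : ℝ} (hq : 0 ≤ q) :
    Tendsto (fun σ₀ => (∫ σ in (1:ℝ)..σ₀, fermiKernel q σ) / σ₀) atTop (nhds 0) := by
  have hbound : Tendsto (fun σ₀ : ℝ => 2 * (√σ₀)⁻¹) atTop (nhds 0) := by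
    simpa using (tendsto_inv_atTop_zero.comp tendsto_sqrt_atTop).const_mul 2
  refine tendsto_of_tendsto_of_tendsto_of_le_of_le' tendsto_const_nhds hbound ?_ ?_
  all_goals filter_upwards [eventually_ge_atTop 1] with σ₀ hσ₀
  · exact div_nonneg (integral_nonneg hσ₀ fun σ hσ => fermiKernel_nonneg q hσ.1)
      (zero_le_one.trans hσ₀)
  · have hsqrt : 0 < √σ₀ := sqrt_pos.2 (zero_lt_one.trans_le hσ₀)
    calc (∫ σ in (1:ℝ)..σ₀, fermiKernel q σ) / σ₀ ≤ 2 * √σ₀ / σ₀ := by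
          gcongr; exact intervalIntegral_fermiKernel_le hq hσ₀
      _ = 2 * (√σ₀)⁻¹ := by
          field_simp
          exact sq_sqrt (zero_le_one.trans hσ₀)

lemma tendsto_vFpow {α : ℝ} (hα : 0 < α) :
    Tendsto (vFpow α) atTop
      (nhds ((1 / (2 * α)) * ∫ σ in Ioi 1, fermiKernel (1 / (2 * α) + 1) σ)) := by
  have hp : 0 ≤ 1 / (2 * α) := by positivity
  have hfirst := intervalIntegral_tendsto_integral_Ioi 1
    (integrableOn_fermiKernel (q := 1 / (2 * α) + 1) (by linarith)) tendsto_id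
  have hsecond := (tendsto_intervalIntegral_fermiKernel_div_atTop hp).const_mul (α - 1)
  have hsum := (hfirst.add hsecond).const_mul (1 / (2 * α))
  rw [mul_zero, add_zero] at hsum
  refine hsum.congr fun σ₀ => ?_
  rw [vFpow_eq, id]
  ring

lemma vFpow_lt {α σ₀ : ℝ} (hα0 : 0 < α) (hα1 : α ≤ 1) (hσ₀ : 1 < σ₀) :
    vFpow α σ₀ < (1 / (2 * α)) * ∫ σ in Ioi 1, fermiKernel (1 / (2 * α) + 1) σ := by
  have hp : 0 ≤ 1 / (2 * α) := by positivity
  have hfirst := intervalIntegral_lt_integral_Ioi hσ₀.le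
    (integrableOn_fermiKernel (q := 1 / (2 * α) + 1) (by linarith))
    fun σ hσ => fermiKernel_pos _ (hσ₀.trans hσ)
  have hsecond : ((α - 1) / σ₀) * ∫ σ in (1:ℝ)..σ₀, fermiKernel (1 / (2 * α)) σ ≤ 0 :=
    mul_nonpos_of_nonpos_of_nonneg (div_nonpos_of_nonpos_of_nonneg (by linarith) (by linarith))
      (integral_nonneg hσ₀.le fun σ hσ => fermiKernel_nonneg _ hσ.1)
  rw [vFpow_eq]
  gcongr
  linarith

/-- v_F converges to √π·Γ(1/(2α)+1/2)/(2α·Γ(1/(2α)+1)) as σ₀ → ∞,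
is strictly below this limit everywhere, and the limit is the least upper bound. -/
theorem fermi_speed_lub (α : ℝ) (hα0 : 0 < α) (hα1 : α ≤ 1) :
    Tendsto (vFpow α) atTop
      (nhds (Real.sqrt π * Real.Gamma (1 / (2 * α) + 1 / 2) /
        (2 * α * Real.Gamma (1 / (2 * α) + 1)))) ∧
    (∀ σ₀ ∈ Set.Ioi (1:ℝ),
      vFpow α σ₀ <
        Real.sqrt π * Real.Gamma (1 / (2 * α) + 1 / 2) /
          (2 * α * Real.Gamma (1 / (2 * α) + 1))) ∧
    IsLUB (vFpow α '' Set.Ioi 1)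
      (Real.sqrt π * Real.Gamma (1 / (2 * α) + 1 / 2) /
        (2 * α * Real.Gamma (1 / (2 * α) + 1))) := by
  have hlimit : (1 / (2 * α)) * ∫ σ in Ioi 1, fermiKernel (1 / (2 * α) + 1) σ =
      √π * Gamma (1 / (2 * α) + 1 / 2) / (2 * α * Gamma (1 / (2 * α) + 1)) := by
    rw [integral_fermiKernel (by linarith [one_div_pos.2 (mul_pos two_pos hα0)]), add_sub_assoc]
    field_simp
    norm_num
  have hlt : ∀ σ₀ ∈ Ioi (1:ℝ), vFpow α σ₀ < √π * Gamma (1 / (2 * α) + 1 / 2) /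
      (2 * α * Gamma (1 / (2 * α) + 1)) := fun σ₀ hσ₀ => hlimit ▸ vFpow_lt hα0 hα1 hσ₀
  have htendsto := hlimit ▸ tendsto_vFpow hα0
  exact ⟨htendsto, hlt, isLUB_image_of_tendsto_atTop (fun σ₀ hσ₀ => (hlt σ₀ hσ₀).le) htendsto⟩
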